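/- Under the stated assumptions, the function v := m + Q has a simple pole at −p₁ + πi with residue −i and a simple pole at p₁ − 2πi with residue i; precisely, (w − (−p₁ + πi))·(m(w) + Q(w)) tends to −i as w → −p₁ + πi (w ≠ −p₁ + πi), and (w − (p₁ − 2πi))·(m(w) + Q(w)) tends to i as w → p₁ − 2πi (w ≠ p₁ − 2πi). -/

import Mathlib

/-!
Both points are simple zeros of `ω² sinh² w + k²`: `sinh` is `πi`-antiperiodic, so `sinh` takes
the value `sinh p₁ = ik/ω` there, while `sinh 2w ≠ 0` because `Re p₁ ≠ 0`. Since `G₂` is `i`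
times the logarithmic derivative of that function, `m` has residue `i (π + 2ia) / (6π)` at such
a point `a`. Among the six cotangents in `Q` exactly one is singular at each of the two points, with
residue `3`; the others are regular, as `sinh` vanishes only on `πiℤ`. Adding up gives `−i` and `i`.
-/

open Complex Filter Topology

noncomputable def Complex.coth (z : ℂ) : ℂ := Complex.cosh z / Complex.sinh z

open scoped Real

namespace Complex

theorem sinh_eq_zero_iff {z : ℂ} : sinh z = 0 ↔ ∃ n : ℤ, z = n * π * I := by
  rw [← mul_eq_zero_iff_right I_ne_zero, ← sin_mul_I, sin_eq_zero_iff]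
  refine ⟨fun ⟨n, hn⟩ => ⟨-n, ?_⟩, fun ⟨n, hn⟩ => ⟨-n, ?_⟩⟩
  · push_cast; linear_combination (-I) * hn + z * I_sq
  · rw [hn]; push_cast; linear_combination ((n : ℂ) * π) * I_sq

theorem sinh_ne_zero_of_re_ne_zero {z : ℂ} (h : z.re ≠ 0) : sinh z ≠ 0 := by
  rintro hz
  obtain ⟨n, rfl⟩ := sinh_eq_zero_iff.mp hz
  simp at h

theorem sinh_ne_zero_of_abs_im_lt_pi {z : ℂ} (h₀ : z.im ≠ 0) (h : |z.im| < π) : sinh z ≠ 0 := by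
  rintro hz
  obtain ⟨n, rfl⟩ := sinh_eq_zero_iff.mp hz
  simp at h₀ h
  rw [abs_of_pos Real.pi_pos] at h
  have : |n| < 1 := by exact_mod_cast (mul_lt_iff_lt_one_left Real.pi_pos).mp h
  exact h₀ (Int.abs_lt_one_iff.mp this)

end Complex

def HasResidueAt (f : ℂ → ℂ) (a r : ℂ) : Prop :=
  Tendsto (fun w => (w - a) * f w) (𝓝[≠] a) (𝓝 r)

namespace HasResidueAt

variable {f g : ℂ → ℂ} {a r s : ℂ}

theorem add (hf : HasResidueAt f a r) (hg : HasResidueAt g a s) :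
    HasResidueAt (fun w => f w + g w) a (r + s) :=
  (Tendsto.add hf hg).congr fun _ => (mul_add _ _ _).symm

theorem sub (hf : HasResidueAt f a r) (hg : HasResidueAt g a s) :
    HasResidueAt (fun w => f w - g w) a (r - s) :=
  (Tendsto.sub hf hg).congr fun _ => (mul_sub _ _ _).symm

theorem continuousAt_mul (hg : ContinuousAt g a) (hf : HasResidueAt f a r) :
    HasResidueAt (fun w => g w * f w) a (g a * r) :=
  ((hg.tendsto.mono_left nhdsWithin_le_nhds).mul hf).congr fun w => by ring

theorem const_mul (c : ℂ) (hf : HasResidueAt f a r) :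
    HasResidueAt (fun w => c * f w) a (c * r) :=
  hf.continuousAt_mul (g := fun _ => c) continuousAt_const

end HasResidueAt

theorem ContinuousAt.hasResidueAt_zero {f : ℂ → ℂ} {a : ℂ} (hf : ContinuousAt f a) :
    HasResidueAt f a 0 := by
  have h : ContinuousAt (fun w => (w - a) * f w) a := by fun_prop
  unfold HasResidueAt
  simpa using h.tendsto.mono_left nhdsWithin_le_nhds

theorem hasResidueAt_div_of_hasDerivAt {N D : ℂ → ℂ} {a d : ℂ} (hN : ContinuousAt N a)
    (hD : HasDerivAt D d a) (hDa : D a = 0) (hd : d ≠ 0) :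
    HasResidueAt (fun w => N w / D w) a (N a / d) := by
  have hslope : Tendsto (fun w => D w / (w - a)) (𝓝[≠] a) (𝓝 d) := by
    refine (hasDerivAt_iff_tendsto_slope.mp hD).congr fun w => ?_
    simp [slope_def_field, hDa]
  refine ((hN.tendsto.mono_left nhdsWithin_le_nhds).div hslope hd).congr' ?_
  filter_upwards [self_mem_nhdsWithin] with w hw
  have hwa : w - a ≠ 0 := sub_ne_zero.mpr hw
  rcases eq_or_ne (D w) 0 with hDw | hDw
  · simp [hDw]
  · simp only [Pi.div_apply]
    field_simp

theorem hasResidueAt_coth_div_of_sinh_eq_zero {a b c : ℂ} (hc : c ≠ 0)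
    (h : sinh ((a - b) / c) = 0) : HasResidueAt (fun w => coth ((w - b) / c)) a c := by
  have hcosh : cosh ((a - b) / c) ≠ 0 := by
    intro h'
    simpa [h, h'] using cosh_sq_sub_sinh_sq ((a - b) / c)
  have hD : HasDerivAt (fun w => sinh ((w - b) / c)) (cosh ((a - b) / c) * (1 / c)) a :=
    (hasDerivAt_sinh _).comp a (((hasDerivAt_id a).sub_const b).div_const c)
  unfold coth
  convert hasResidueAt_div_of_hasDerivAt (N := fun w => cosh ((w - b) / c)) (by fun_prop) hD h
    (by simp [hcosh, hc]) using 1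
  field_simp

theorem hasResidueAt_coth_div_of_sinh_ne_zero {a b c : ℂ} (h : sinh ((a - b) / c) ≠ 0) :
    HasResidueAt (fun w => coth ((w - b) / c)) a 0 :=
  ContinuousAt.hasResidueAt_zero <| by unfold coth; fun_prop (disch := exact h)

/-- The numerator is `I` times the derivative of the denominator. -/
theorem hasResidueAt_sinh_two_mul_div {a c e : ℂ} (hc : c ≠ 0) (ha : c * sinh a ^ 2 + e = 0)
    (h2a : sinh (2 * a) ≠ 0) :
    HasResidueAt (fun w => I * c * sinh (2 * w) / (c * sinh w ^ 2 + e)) a I := by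
  have hD : HasDerivAt (fun w => c * sinh w ^ 2 + e) (c * sinh (2 * a)) a :=
    (((hasDerivAt_sinh a).pow 2).const_mul c).add_const e |>.congr_deriv <| by
      rw [sinh_two_mul]; push_cast; ring
  convert hasResidueAt_div_of_hasDerivAt (N := fun w => I * c * sinh (2 * w)) (by fun_prop) hD ha
    (mul_ne_zero hc h2a) using 1
  field_simp

/-- The function `Q` of the statement, with coefficients `α = i - m₁`, `β = m₂`, `γ = m₃`. -/
noncomputable def cothCombination (p α β γ w : ℂ) : ℂ :=
  (α / 3) * coth ((w - p) / 3)
    - (β / 3) * coth ((w - p - π * I) / 3)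
    - (γ / 3) * coth ((w - p + π * I) / 3)
    - (α / 3) * coth ((w + p - π * I) / 3)
    + (β / 3) * coth ((w + p) / 3)
    + (γ / 3) * coth ((w + p + π * I) / 3)

theorem cothCombination_eq_fun_sub (p α β γ : ℂ) :
    cothCombination p α β γ = fun w =>
      (α / 3) * coth ((w - p) / 3)
        - (β / 3) * coth ((w - (p + π * I)) / 3)
        - (γ / 3) * coth ((w - (p - π * I)) / 3)
        - (α / 3) * coth ((w - (-p + π * I)) / 3)
        + (β / 3) * coth ((w - -p) / 3)
        + (γ / 3) * coth ((w - (-p - π * I)) / 3) := by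
  funext w
  rw [cothCombination]
  ring_nf

theorem hasResidueAt_cothCombination_neg_add_pi_mul_I {p : ℂ} (hp : p.re ≠ 0) (α β γ : ℂ) :
    HasResidueAt (cothCombination p α β γ) (-p + π * I) (-α) := by
  rw [cothCombination_eq_fun_sub,
    show -α = α / 3 * 0 - β / 3 * 0 - γ / 3 * 0 - α / 3 * 3 + β / 3 * 0 + γ / 3 * 0 by ring]
  refine (((((((hasResidueAt_coth_div_of_sinh_ne_zero ?_).const_mul _).sub
    ((hasResidueAt_coth_div_of_sinh_ne_zero ?_).const_mul _)).sub
    ((hasResidueAt_coth_div_of_sinh_ne_zero ?_).const_mul _)).sub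
    ((hasResidueAt_coth_div_of_sinh_eq_zero three_ne_zero ?_).const_mul _)).add
    ((hasResidueAt_coth_div_of_sinh_ne_zero ?_).const_mul _)).add
    ((hasResidueAt_coth_div_of_sinh_ne_zero ?_).const_mul _))
  · exact sinh_ne_zero_of_re_ne_zero (by simp; contrapose! hp; linarith)
  · exact sinh_ne_zero_of_re_ne_zero (by simp; contrapose! hp; linarith)
  · exact sinh_ne_zero_of_re_ne_zero (by simp; contrapose! hp; linarith)
  · simp
  · exact sinh_ne_zero_of_abs_im_lt_pi (by ring_nf; simp [Real.pi_ne_zero])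
      (by simp [abs_lt]; constructor <;> linarith [Real.pi_pos])
  · exact sinh_ne_zero_of_abs_im_lt_pi (by ring_nf; simp [Real.pi_ne_zero])
      (by simp [abs_lt]; constructor <;> linarith [Real.pi_pos])

theorem hasResidueAt_cothCombination_sub_two_pi_mul_I {p : ℂ} (hp : p.re ≠ 0) (α β γ : ℂ) :
    HasResidueAt (cothCombination p α β γ) (p - 2 * π * I) (-β) := by
  rw [cothCombination_eq_fun_sub,
    show -β = α / 3 * 0 - β / 3 * 3 - γ / 3 * 0 - α / 3 * 0 + β / 3 * 0 + γ / 3 * 0 by ring]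
  refine (((((((hasResidueAt_coth_div_of_sinh_ne_zero ?_).const_mul _).sub
    ((hasResidueAt_coth_div_of_sinh_eq_zero three_ne_zero ?_).const_mul _)).sub
    ((hasResidueAt_coth_div_of_sinh_ne_zero ?_).const_mul _)).sub
    ((hasResidueAt_coth_div_of_sinh_ne_zero ?_).const_mul _)).add
    ((hasResidueAt_coth_div_of_sinh_ne_zero ?_).const_mul _)).add
    ((hasResidueAt_coth_div_of_sinh_ne_zero ?_).const_mul _))
  · exact sinh_ne_zero_of_abs_im_lt_pi (by ring_nf; simp [Real.pi_ne_zero])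
      (by simp [abs_lt]; constructor <;> linarith [Real.pi_pos])
  · rw [show (p - 2 * π * I - (p + π * I)) / 3 = -(π * I) by ring]; simp [sinh_mul_I]
  · exact sinh_ne_zero_of_abs_im_lt_pi (by ring_nf; simp [Real.pi_ne_zero])
      (by simp [abs_lt]; constructor <;> linarith [Real.pi_pos])
  · exact sinh_ne_zero_of_re_ne_zero (by simp; contrapose! hp; linarith)
  · exact sinh_ne_zero_of_re_ne_zero (by simp; contrapose! hp; linarith)
  · exact sinh_ne_zero_of_re_ne_zero (by simp; contrapose! hp; linarith)

theorem residues_of_v_at_remaining_poles_general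
    (ω : ℂ) (k : ℝ)
    (G₂ m : ℂ → ℂ)
    (hG₂ : ∀ w : ℂ, G₂ w = I * ω ^ 2 * Complex.sinh (2 * w) /
      (ω ^ 2 * (Complex.sinh w) ^ 2 + (k : ℂ) ^ 2))
    (hm : ∀ w : ℂ, m w = ((Real.pi + 2 * I * w) / (6 * Real.pi)) * G₂ w)
    (p₁ : ℂ) (hp : Complex.sinh p₁ = I * k / ω)
    (hre : p₁.re ≠ 0)
    (m₁ m₂ m₃ : ℂ)
    (hm₁ : m₁ = -p₁ / (3 * Real.pi) + I / 6)
    (hm₂ : m₂ = -p₁ / (3 * Real.pi) - I / 6)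
    (Q : ℂ → ℂ)
    (hQ : ∀ w : ℂ, Q w =
      ((I - m₁) / 3) * Complex.coth ((w - p₁) / 3)
      - (m₂ / 3) * Complex.coth ((w - p₁ - Real.pi * I) / 3)
      - (m₃ / 3) * Complex.coth ((w - p₁ + Real.pi * I) / 3)
      - ((I - m₁) / 3) * Complex.coth ((w + p₁ - Real.pi * I) / 3)
      + (m₂ / 3) * Complex.coth ((w + p₁) / 3)
      + (m₃ / 3) * Complex.coth ((w + p₁ + Real.pi * I) / 3)) :
    Tendsto (fun w => (w - (-p₁ + Real.pi * I)) * (m w + Q w))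
      (𝓝[≠] (-p₁ + Real.pi * I)) (𝓝 (-I)) ∧
    Tendsto (fun w => (w - (p₁ - 2 * Real.pi * I)) * (m w + Q w))
      (𝓝[≠] (p₁ - 2 * Real.pi * I)) (𝓝 I) := by
  have hsinh : sinh p₁ ≠ 0 := sinh_ne_zero_of_re_ne_zero hre
  have hω : ω ≠ 0 := by rintro rfl; exact hsinh (by simpa using hp)
  have hm_res : ∀ a, sinh a = sinh p₁ → (2 * a).re ≠ 0 →
      HasResidueAt m a ((π + 2 * I * a) / (6 * π) * I) := by
    intro a ha h2a
    have hDa : ω ^ 2 * sinh a ^ 2 + (k : ℂ) ^ 2 = 0 := by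
      rw [ha, hp]; field_simp; linear_combination (k : ℂ) ^ 2 * I_sq
    rw [funext hm, funext hG₂]
    exact (hasResidueAt_sinh_two_mul_div (pow_ne_zero 2 hω) hDa
      (sinh_ne_zero_of_re_ne_zero h2a)).continuousAt_mul (by fun_prop)
  obtain rfl : Q = cothCombination p₁ (I - m₁) m₂ m₃ := funext hQ
  have hπ : (π : ℂ) ≠ 0 := ofReal_ne_zero.mpr Real.pi_ne_zero
  constructor
  · have hr : (π + 2 * I * (-p₁ + π * I)) / (6 * π) * I + -(I - m₁) = -I := by
      rw [hm₁]; field_simp; linear_combination (-6 * p₁ + 6 * π * I) * I_sq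
    have h := (hm_res _ (by simp) (by simpa using hre)).add
      (hasResidueAt_cothCombination_neg_add_pi_mul_I hre (I - m₁) m₂ m₃)
    rwa [hr] at h
  · have hr : (π + 2 * I * (p₁ - 2 * π * I)) / (6 * π) * I + -m₂ = I := by
      rw [hm₂]; field_simp; linear_combination (6 * p₁ - 12 * π * I) * I_sq
    have h := (hm_res _ (sinh_periodic.sub_eq p₁) (by simpa using hre)).add
      (hasResidueAt_cothCombination_sub_two_pi_mul_I hre (I - m₁) m₂ m₃)
    rwa [hr] at h

theorem residues_of_v_at_remaining_poles
    (ω : ℂ) (hω : 0 < ω.im) (k : ℝ) (hk : 0 < k)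
    (G₂ m : ℂ → ℂ)
    (hG₂ : ∀ w : ℂ, G₂ w = I * ω ^ 2 * Complex.sinh (2 * w) /
      (ω ^ 2 * (Complex.sinh w) ^ 2 + (k : ℂ) ^ 2))
    (hm : ∀ w : ℂ, m w = ((Real.pi + 2 * I * w) / (6 * Real.pi)) * G₂ w)
    (p₁ : ℂ) (hp : Complex.sinh p₁ = I * k / ω) (hc : Complex.cosh p₁ ≠ 0)
    (hre : p₁.re ≠ 0)
    (m₁ m₂ m₃ : ℂ)
    (hm₁ : m₁ = -p₁ / (3 * Real.pi) + I / 6)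
    (hm₂ : m₂ = -p₁ / (3 * Real.pi) - I / 6)
    (hm₃ : m₃ = -p₁ / (3 * Real.pi) + I / 2)
    (Q : ℂ → ℂ)
    (hQ : ∀ w : ℂ, Q w =
      ((I - m₁) / 3) * Complex.coth ((w - p₁) / 3)
      - (m₂ / 3) * Complex.coth ((w - p₁ - Real.pi * I) / 3)
      - (m₃ / 3) * Complex.coth ((w - p₁ + Real.pi * I) / 3)
      - ((I - m₁) / 3) * Complex.coth ((w + p₁ - Real.pi * I) / 3)
      + (m₂ / 3) * Complex.coth ((w + p₁) / 3)
      + (m₃ / 3) * Complex.coth ((w + p₁ + Real.pi * I) / 3)) :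
    Tendsto (fun w => (w - (-p₁ + Real.pi * I)) * (m w + Q w))
      (𝓝[≠] (-p₁ + Real.pi * I)) (𝓝 (-I)) ∧
    Tendsto (fun w => (w - (p₁ - 2 * Real.pi * I)) * (m w + Q w))
      (𝓝[≠] (p₁ - 2 * Real.pi * I)) (𝓝 I) :=
  residues_of_v_at_remaining_poles_general ω k G₂ m hG₂ hm p₁ hp hre m₁ m₂ m₃ hm₁ hm₂ Q hQ
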